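/- arXiv:2301.05743 — 2 statements merged into one kernel-verified Lean document; each statement's English description precedes it below -/
import Mathlib

section
/- (Spatial+ bias decomposition.) Let $y = \beta_0\mathbf{1} + \beta_x x + \beta_z z + \epsilon$ with $E(\epsilon)=0$, and let $r_x \in \mathbb{R}^n$ be any vector not a scalar multiple of $\mathbf{1}$. Let $\hat{\beta}^{S+}$ denote the GLS estimator with design matrix $[\mathbf{1}\ r_x]$ and weight matrix $\hat{\Sigma}^{-1}$, applied to response $y$. Then $E(\hat{\beta}_x^{S+}) - \beta_x = A_2^*(r_x, x) + B_2(r_x, x)$, where $A_2^*(r_x,x) = \beta_x\left(\frac{\|\mathbf{1}\|_{\hat{\Sigma}^{-1}}^2\langle r_x,x\rangle_{\hat{\Sigma}^{-1}} - \langle r_x,\mathbf{1}\rangle_{\hat{\Sigma}^{-1}}\langle x,\mathbf{1}\rangle_{\hat{\Sigma}^{-1}}}{\|\mathbf{1}\|_{\hat{\Sigma}^{-1}}^2\|r_x\|_{\hat{\Sigma}^{-1}}^2 - \langle r_x,\mathbf{1}\rangle_{\hat{\Sigma}^{-1}}^2} - 1\right)$ and $B_2(r_x,x) = \beta_z\frac{\|\mathbf{1}\|_{\hat{\Sigma}^{-1}}^2\langle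 r_x,z\rangle_{\hat{\Sigma}^{-1}} - \langle r_x,\mathbf{1}\rangle_{\hat{\Sigma}^{-1}}\langle z,\mathbf{1}\rangle_{\hat{\Sigma}^{-1}}}{\|\mathbf{1}\|_{\hat{\Sigma}^{-1}}^2\|r_x\|_{\hat{\Sigma}^{-1}}^2 - \langle r_x,\mathbf{1}\rangle_{\hat{\Sigma}^{-1}}^2}$. -/
open Matrix MeasureTheory

/-- Spatial+ bias decomposition: with design matrix `[1 rₓ]` and GLS weight
`Σ̂⁻¹`, the bias of the slope estimator is `A₂*(rₓ,x) + B₂(rₓ,x)`. -/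
theorem stmt_8 {n : ℕ} (x z rx : Fin n → ℝ) (β0 βx βz : ℝ)
    (ones : Fin n → ℝ) (hones : ones = fun _ => (1 : ℝ))
    (M : Matrix (Fin n) (Fin n) ℝ)
    (hSymm : Mᵀ = M)
    (hPD : ∀ v : Fin n → ℝ, v ≠ 0 → 0 < v ⬝ᵥ (M *ᵥ v))
    (hrx : ∀ c : ℝ, rx ≠ c • ones)
    {Ω : Type*} [MeasurableSpace Ω] (μ : Measure Ω) [IsProbabilityMeasure μ]
    (ε : Ω → Fin n → ℝ)
    (hεint : ∀ i, Integrable (fun ω => ε ω i) μ)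
    (hεmean : ∀ i, (∫ ω, ε ω i ∂μ) = 0)
    (y : Ω → Fin n → ℝ)
    (hy : ∀ ω i, y ω i = β0 + βx * x i + βz * z i + ε ω i)
    (Xs : Matrix (Fin n) (Fin 2) ℝ)
    (hXs : Xs = Matrix.of fun i j => ![(1 : ℝ), rx i] j)
    (βhat : Ω → Fin 2 → ℝ)
    (hβhat : ∀ ω, βhat ω = ((Xsᵀ * M * Xs)⁻¹ * Xsᵀ * M) *ᵥ y ω)
    (A B : ℝ)
    (hA : A = βx * (((ones ⬝ᵥ (M *ᵥ ones)) * (rx ⬝ᵥ (M *ᵥ x)) -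
            (rx ⬝ᵥ (M *ᵥ ones)) * (x ⬝ᵥ (M *ᵥ ones))) /
        ((ones ⬝ᵥ (M *ᵥ ones)) * (rx ⬝ᵥ (M *ᵥ rx)) - (rx ⬝ᵥ (M *ᵥ ones)) ^ 2) - 1))
    (hB : B = βz * (((ones ⬝ᵥ (M *ᵥ ones)) * (rx ⬝ᵥ (M *ᵥ z)) -
            (rx ⬝ᵥ (M *ᵥ ones)) * (z ⬝ᵥ (M *ᵥ ones))) /
        ((ones ⬝ᵥ (M *ᵥ ones)) * (rx ⬝ᵥ (M *ᵥ rx)) - (rx ⬝ᵥ (M *ᵥ ones)) ^ 2))) :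
    (∫ ω, βhat ω 1 ∂μ) - βx = A + B := by
  -- symmetry of the bilinear form
  have symm : ∀ v w : Fin n → ℝ, v ⬝ᵥ (M *ᵥ w) = w ⬝ᵥ (M *ᵥ v) := by
    intro v w
    rw [Matrix.dotProduct_mulVec, ← Matrix.mulVec_transpose, hSymm, dotProduct_comm]
  set a : ℝ := ones ⬝ᵥ (M *ᵥ ones) with ha
  set b : ℝ := rx ⬝ᵥ (M *ᵥ ones) with hb
  set c : ℝ := rx ⬝ᵥ (M *ᵥ rx) with hc
  set d : ℝ := a * c - b ^ 2 with hd
  have hn : 0 < n := by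
    rcases Nat.eq_zero_or_pos n with h | h
    · subst h
      exact absurd (Subsingleton.elim rx ((0:ℝ) • ones)) (hrx 0)
    · exact h
  have hones_ne : ones ≠ 0 := by
    intro h
    have := congrFun h ⟨0, hn⟩
    simp [hones] at this
  have hapos : 0 < a := hPD ones hones_ne
  have hquad : ∀ t : ℝ, 0 < t ^ 2 * a - 2 * t * b + c := by
    intro t
    have hne : t • ones - rx ≠ 0 := by
      intro h
      apply hrx t
      exact (sub_eq_zero.mp h).symm
    have := hPD _ hne
    have hexp : (t • ones - rx) ⬝ᵥ (M *ᵥ (t • ones - rx)) = t ^ 2 * a - 2 * t * b + c := by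
      simp only [Matrix.mulVec_sub, Matrix.mulVec_smul, sub_dotProduct,
        dotProduct_sub, smul_dotProduct, dotProduct_smul, smul_eq_mul]
      rw [symm ones rx]
      ring
    linarith [hexp ▸ this]
  have hdpos : 0 < d := by
    have := hquad (b / a)
    have h2 : 0 < (c - b ^ 2 / a) := by
      have : (b / a) ^ 2 * a - 2 * (b / a) * b + c = c - b ^ 2 / a := by
        field_simp
        ring
      linarith [this ▸ hquad (b / a)]
    have : 0 < a * (c - b ^ 2 / a) := mul_pos hapos h2
    have heq : a * (c - b ^ 2 / a) = d := by field_simp; ring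
    linarith [heq ▸ this]
  have hdne : d ≠ 0 := ne_of_gt hdpos
  -- columns of Xs
  have hcol0 : (fun k => Xs k 0) = ones := by
    funext k; simp [hXs, hones]
  have hcol1 : (fun k => Xs k 1) = rx := by
    funext k; simp [hXs]
  -- entries of the Gram matrix
  have hentry : ∀ i j, (Xsᵀ * M * Xs) i j =
      (fun k => Xs k i) ⬝ᵥ (M *ᵥ fun k => Xs k j) := by
    intro i j
    simp only [Matrix.mul_apply, Matrix.transpose_apply, Matrix.mulVec, dotProduct,
      Finset.sum_mul, Finset.mul_sum]
    rw [Finset.sum_comm]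
    exact Finset.sum_congr rfl fun k _ => Finset.sum_congr rfl fun l _ => by ring
  have hG : Xsᵀ * M * Xs = !![a, b; b, c] := by
    ext i j
    rw [hentry]
    fin_cases i <;> fin_cases j <;>
      simp [hcol0, hcol1] <;>
      first | rfl | exact symm ones rx
  have hInv : (Xsᵀ * M * Xs)⁻¹ = d⁻¹ • !![c, -b; -b, a] := by
    rw [hG, Matrix.inv_def, Matrix.det_fin_two_of, Matrix.adjugate_fin_two_of,
      Ring.inverse_eq_inv]
    congr 1
    rw [hd]; ring_nf
  -- the slope estimate as a dot product
  set w : Fin n → ℝ := fun i => d⁻¹ * (a * (rx ᵥ* M) i - b * (ones ᵥ* M) i) with hw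
  have hwdot : ∀ v : Fin n → ℝ,
      w ⬝ᵥ v = d⁻¹ * (a * ((rx ᵥ* M) ⬝ᵥ v) - b * ((ones ᵥ* M) ⬝ᵥ v)) := by
    intro v
    simp only [dotProduct, hw, Finset.mul_sum, ← Finset.sum_sub_distrib]
    exact Finset.sum_congr rfl fun i _ => by ring
  have hstep : ∀ v : Fin n → ℝ,
      (((Xsᵀ * M * Xs)⁻¹ * Xsᵀ * M) *ᵥ v) 1 = w ⬝ᵥ v := by
    intro v
    rw [← Matrix.mulVec_mulVec, ← Matrix.mulVec_mulVec, hInv]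
    have hXv : Xsᵀ *ᵥ (M *ᵥ v) = ![ones ⬝ᵥ (M *ᵥ v), rx ⬝ᵥ (M *ᵥ v)] := by
      funext j
      fin_cases j
      · show (fun k => Xs k 0) ⬝ᵥ (M *ᵥ v) = _
        rw [hcol0]; rfl
      · show (fun k => Xs k 1) ⬝ᵥ (M *ᵥ v) = _
        rw [hcol1]; rfl
    rw [hXv, hwdot, Matrix.dotProduct_mulVec, Matrix.dotProduct_mulVec]
    generalize ones ⬝ᵥ (M *ᵥ v) = p
    generalize rx ⬝ᵥ (M *ᵥ v) = q
    simp [Matrix.smul_mulVec, Matrix.mulVec, dotProduct, Fin.sum_univ_two]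
    ring
  -- mean vector
  set m : Fin n → ℝ := fun i => β0 + βx * x i + βz * z i with hm
  have hsplit : ∀ ω, βhat ω 1 = (∑ i, w i * m i) + ∑ i, w i * ε ω i := by
    intro ω
    rw [hβhat, hstep]
    simp only [dotProduct, ← Finset.sum_add_distrib]
    exact Finset.sum_congr rfl fun i _ => by rw [hy]; simp [hm]; ring
  have hint : (∫ ω, βhat ω 1 ∂μ) = ∑ i, w i * m i := by
    simp_rw [hsplit]
    rw [integral_add (integrable_const _)
      (integrable_finset_sum _ fun i _ => (hεint i).const_mul _),
      integral_finset_sum _ fun i _ => (hεint i).const_mul _]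
    simp [MeasureTheory.integral_const_mul, hεmean]
  rw [hint, hA, hB]
  have hsum : (∑ i, w i * m i) = w ⬝ᵥ m := rfl
  have hmvec : ∀ v : Fin n → ℝ, v ⬝ᵥ (M *ᵥ m) =
      β0 * (v ⬝ᵥ (M *ᵥ ones)) + βx * (v ⬝ᵥ (M *ᵥ x)) + βz * (v ⬝ᵥ (M *ᵥ z)) := by
    intro v
    have hm' : m = β0 • ones + βx • x + βz • z := by
      funext i; simp [hm, hones]
    rw [hm']
    simp [Matrix.mulVec_add, Matrix.mulVec_smul, dotProduct_add,
      dotProduct_smul, smul_eq_mul]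
  rw [hsum, hwdot, ← Matrix.dotProduct_mulVec, ← Matrix.dotProduct_mulVec,
    hmvec rx, hmvec ones, symm x ones, symm z ones, ← ha, ← hb]
  field_simp
  ring
end

section
/- (Spatial+ with intercept-only residuals recovers the spatial model bias.) Let $r_x = x - \alpha\mathbf{1}$ where $\alpha = \frac{\langle x,\mathbf{1}\rangle_{\hat{\Sigma}^{-1}}}{\|\mathbf{1}\|_{\hat{\Sigma}^{-1}}^2}$. Then in the Spatial+ bias decomposition: (i) $A_2^*(r_x, x) = 0$, i.e., the $\beta_x$-contribution to the bias vanishes; and (ii) the total bias $E(\hat{\beta}_x^{S+}) - \beta_x$ equals $\beta_z\frac{\|\mathbf{1}\|_{\hat{\Sigma}^{-1}}^2\langle x,z\rangle_{\hat{\Sigma}^{-1}} - \langle x,\mathbf{1}\rangle_{\hat{\Sigma}^{-1}}\langle z,\mathbf{1}\rangle_{\hat{\Sigma}^{-1}}}{\|\mathbf{1}\|_{\hat{\Sigma}^{-1}}^2\|x\|_{\hat{\Sigma}^{-1}}^2 - \langle x,\mathbf{1}\rangle_{\hat{\Sigma}^{-1}}^2}$, which is exactly the bias of the ordinary spatial (GLS)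 model with covariate $x$. -/
/-! Because `rₓ` is the `Σ̂⁻¹`-orthogonal residual of `x` on `1`, the Gram matrix of the design
`[1, rₓ]` is diagonal, so the slope estimate is `⟨rₓ, y⟩ / ‖rₓ‖²`, with expectation
`⟨rₓ, β₀1 + βₓx + β_z z⟩ / ‖rₓ‖²`. From `⟨rₓ, 1⟩ = 0` and `‖rₓ‖² = ⟨rₓ, x⟩` this is
`βₓ + β_z ⟨rₓ, z⟩ / ⟨rₓ, x⟩`, and `‖1‖² ⟨rₓ, w⟩ = ‖1‖² ⟨x, w⟩ - ⟨x, 1⟩⟨1, w⟩` turns it into the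
GLS bias. -/

open Matrix MeasureTheory

section

variable {ι : Type*} [Fintype ι]

theorem Matrix.IsSymm.dotProduct_mulVec_comm {R : Type*} [CommSemiring R] {M : Matrix ι ι R}
    (hM : M.IsSymm) (a b : ι → R) : a ⬝ᵥ (M *ᵥ b) = b ⬝ᵥ (M *ᵥ a) := by
  simpa [hM.eq] using dotProduct_transpose_mulVec M a b

theorem Matrix.mul_mul_transpose_apply {k R : Type*} [CommSemiring R] (A : Matrix k ι R)
    (M : Matrix ι ι R) (j l : k) : (A * M * Aᵀ) j l = A j ⬝ᵥ (M *ᵥ A l) := by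
  rw [mul_apply, dotProduct_mulVec, dotProduct]
  simp [vecMul, dotProduct, mul_apply]

theorem gls_coeff_one_of_orthogonal (M : Matrix ι ι ℝ) (u v y : ι → ℝ)
    (huv : u ⬝ᵥ (M *ᵥ v) = 0) (hvu : v ⬝ᵥ (M *ᵥ u) = 0) (hu : u ⬝ᵥ (M *ᵥ u) ≠ 0) :
    (((of ![u, v] * M * (of ![u, v])ᵀ)⁻¹ * of ![u, v] * M) *ᵥ y) 1 =
      v ⬝ᵥ (M *ᵥ y) / v ⬝ᵥ (M *ᵥ v) := by
  have hgram : of ![u, v] * M * (of ![u, v])ᵀ =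
      !![u ⬝ᵥ (M *ᵥ u), 0; 0, v ⬝ᵥ (M *ᵥ v)] := by
    ext j l
    fin_cases j <;> fin_cases l <;> rw [mul_mul_transpose_apply]
    exacts [rfl, huv, hvu, rfl]
  rw [hgram, ← mulVec_mulVec, ← mulVec_mulVec, inv_def, det_fin_two_of, adjugate_fin_two_of,
    Ring.inverse_eq_inv', smul_mulVec, Pi.smul_apply]
  simp only [cons_mulVec, empty_mulVec, cons_val_one, cons_val_zero, vec2_dotProduct, smul_eq_mul,
    neg_zero, zero_mul, zero_add, mul_zero, sub_zero]
  rw [← div_eq_inv_mul, mul_div_mul_left _ _ hu]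

theorem integral_dotProduct_add_centered {Ω : Type*} [MeasurableSpace Ω] {μ : Measure Ω}
    [IsProbabilityMeasure μ] (w m : ι → ℝ) {ε : Ω → ι → ℝ}
    (hint : ∀ i, Integrable (fun ω => ε ω i) μ) (hmean : ∀ i, ∫ ω, ε ω i ∂μ = 0) :
    ∫ ω, w ⬝ᵥ (m + ε ω) ∂μ = w ⬝ᵥ m := by
  have hnoise : ∫ ω, w ⬝ᵥ ε ω ∂μ = 0 := by
    simp only [dotProduct]
    rw [integral_finsetSum _ fun i _ => (hint i).const_mul _]
    simp [integral_const_mul, hmean]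
  have hint' : Integrable (fun ω => w ⬝ᵥ ε ω) μ := by
    simp only [dotProduct]
    exact integrable_finsetSum _ fun i _ => (hint i).const_mul _
  simp only [dotProduct_add]
  rw [integral_add (integrable_const _) hint', hnoise]
  simp

noncomputable def projResidual (M : Matrix ι ι ℝ) (u x : ι → ℝ) : ι → ℝ :=
  x - (x ⬝ᵥ (M *ᵥ u) / u ⬝ᵥ (M *ᵥ u)) • u

section projResidual

variable {M : Matrix ι ι ℝ} {u : ι → ℝ} (x : ι → ℝ)

theorem projResidual_orthogonal (hu : u ⬝ᵥ (M *ᵥ u) ≠ 0) :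
    projResidual M u x ⬝ᵥ (M *ᵥ u) = 0 := by
  rw [projResidual, sub_dotProduct, smul_dotProduct, smul_eq_mul, div_mul_cancel₀ _ hu, sub_self]

theorem projResidual_dotProduct_mulVec_self (hu : u ⬝ᵥ (M *ᵥ u) ≠ 0) :
    projResidual M u x ⬝ᵥ (M *ᵥ projResidual M u x) = projResidual M u x ⬝ᵥ (M *ᵥ x) := by
  conv_lhs => rw [projResidual, mulVec_sub, mulVec_smul, dotProduct_sub, dotProduct_smul,
    ← projResidual, projResidual_orthogonal x hu, smul_zero, sub_zero]

theorem projResidual_dotProduct_mulVec (hM : M.IsSymm) (hu : u ⬝ᵥ (M *ᵥ u) ≠ 0) (w : ι → ℝ) :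
    u ⬝ᵥ (M *ᵥ u) * (x ⬝ᵥ (M *ᵥ w)) - x ⬝ᵥ (M *ᵥ u) * (w ⬝ᵥ (M *ᵥ u)) =
      u ⬝ᵥ (M *ᵥ u) * (projResidual M u x ⬝ᵥ (M *ᵥ w)) := by
  rw [projResidual, sub_dotProduct, smul_dotProduct, smul_eq_mul, hM.dotProduct_mulVec_comm w u]
  field_simp

end projResidual

end

theorem stmt_9_general {n : ℕ} (x z : Fin n → ℝ) (β0 βx βz : ℝ)
    (ones : Fin n → ℝ) (hones : ones = fun _ => (1 : ℝ))
    (M : Matrix (Fin n) (Fin n) ℝ)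
    (hSymm : Mᵀ = M)
    (hPD : ∀ v : Fin n → ℝ, v ≠ 0 → 0 < v ⬝ᵥ (M *ᵥ v))
    (hx : ∀ c : ℝ, x ≠ c • ones)
    (α : ℝ) (hα : α = (x ⬝ᵥ (M *ᵥ ones)) / (ones ⬝ᵥ (M *ᵥ ones)))
    (rx : Fin n → ℝ) (hrx : rx = x - α • ones)
    {Ω : Type*} [MeasurableSpace Ω] (μ : Measure Ω) [IsProbabilityMeasure μ]
    (ε : Ω → Fin n → ℝ)
    (hεint : ∀ i, Integrable (fun ω => ε ω i) μ)
    (hεmean : ∀ i, (∫ ω, ε ω i ∂μ) = 0)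
    (y : Ω → Fin n → ℝ)
    (hy : ∀ ω i, y ω i = β0 + βx * x i + βz * z i + ε ω i)
    (Xs : Matrix (Fin n) (Fin 2) ℝ)
    (hXs : Xs = Matrix.of fun i j => ![(1 : ℝ), rx i] j)
    (βhat : Ω → Fin 2 → ℝ)
    (hβhat : ∀ ω, βhat ω = ((Xsᵀ * M * Xs)⁻¹ * Xsᵀ * M) *ᵥ y ω)
    (A : ℝ)
    (hA : A = βx * (((ones ⬝ᵥ (M *ᵥ ones)) * (rx ⬝ᵥ (M *ᵥ x)) -
            (rx ⬝ᵥ (M *ᵥ ones)) * (x ⬝ᵥ (M *ᵥ ones))) /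
        ((ones ⬝ᵥ (M *ᵥ ones)) * (rx ⬝ᵥ (M *ᵥ rx)) - (rx ⬝ᵥ (M *ᵥ ones)) ^ 2) - 1)) :
    A = 0 ∧
    (∫ ω, βhat ω 1 ∂μ) - βx =
      βz * ((ones ⬝ᵥ (M *ᵥ ones)) * (x ⬝ᵥ (M *ᵥ z)) -
              (x ⬝ᵥ (M *ᵥ ones)) * (z ⬝ᵥ (M *ᵥ ones))) /
        ((ones ⬝ᵥ (M *ᵥ ones)) * (x ⬝ᵥ (M *ᵥ x)) - (x ⬝ᵥ (M *ᵥ ones)) ^ 2) := by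
  have hM : M.IsSymm := hSymm
  have hones_ne : ones ≠ 0 := by
    intro h
    have : IsEmpty (Fin n) := ⟨fun i => by simpa [hones] using congrFun h i⟩
    exact hx 0 (Subsingleton.elim _ _)
  have h11 : ones ⬝ᵥ (M *ᵥ ones) ≠ 0 := (hPD ones hones_ne).ne'
  have hr : rx = projResidual M ones x := by rw [hrx, hα]; rfl
  have hrr_pos : 0 < rx ⬝ᵥ (M *ᵥ rx) := hPD rx fun h => hx α (sub_eq_zero.mp (hrx ▸ h))
  have horth : rx ⬝ᵥ (M *ᵥ ones) = 0 := hr ▸ projResidual_orthogonal x h11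
  have hrr : rx ⬝ᵥ (M *ᵥ rx) = rx ⬝ᵥ (M *ᵥ x) := hr ▸ projResidual_dotProduct_mulVec_self x h11
  refine ⟨by rw [hA, horth, ← hrr]; field_simp; ring, ?_⟩
  have hcoef (ω : Ω) : βhat ω 1 = (rx ᵥ* M) ⬝ᵥ y ω / rx ⬝ᵥ (M *ᵥ rx) := by
    have hXs' : Xs = (of ![ones, rx])ᵀ := by
      ext i j; fin_cases j <;> simp [hXs, hones]
    rw [hβhat, hXs', transpose_transpose, ← dotProduct_mulVec]
    exact gls_coeff_one_of_orthogonal M ones rx (y ω)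
      (by rw [hM.dotProduct_mulVec_comm, horth]) horth h11
  have hy' (ω : Ω) : y ω = (β0 • ones + βx • x + βz • z) + ε ω := by
    ext i; simp [hy, hones]
  simp_rw [hcoef, hy']
  rw [integral_div, integral_dotProduct_add_centered _ _ hεint hεmean, ← dotProduct_mulVec]
  simp only [mulVec_add, mulVec_smul, dotProduct_add, dotProduct_smul, smul_eq_mul, horth]
  rw [sq, projResidual_dotProduct_mulVec x hM h11, projResidual_dotProduct_mulVec x hM h11, ← hr,
    ← hrr]
  field_simp
  ring

/-- Spatial+ with intercept-only residuals recovers the spatial model bias: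
with `rₓ = x - α•1`, `α = ⟨x,1⟩/‖1‖²` (the Σ̂⁻¹-orthogonal projection
residual), (i) the `βₓ`-contribution `A₂*` vanishes, and (ii) the total bias
equals the bias of the ordinary spatial (GLS) model with covariate `x`. -/
theorem stmt_9 {n : ℕ} (hn : 0 < n) (x z : Fin n → ℝ) (β0 βx βz : ℝ)
    (ones : Fin n → ℝ) (hones : ones = fun _ => (1 : ℝ))
    (M : Matrix (Fin n) (Fin n) ℝ)
    (hSymm : Mᵀ = M)
    (hPD : ∀ v : Fin n → ℝ, v ≠ 0 → 0 < v ⬝ᵥ (M *ᵥ v))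
    (hx : ∀ c : ℝ, x ≠ c • ones)
    (α : ℝ) (hα : α = (x ⬝ᵥ (M *ᵥ ones)) / (ones ⬝ᵥ (M *ᵥ ones)))
    (rx : Fin n → ℝ) (hrx : rx = x - α • ones)
    {Ω : Type*} [MeasurableSpace Ω] (μ : Measure Ω) [IsProbabilityMeasure μ]
    (ε : Ω → Fin n → ℝ)
    (hεint : ∀ i, Integrable (fun ω => ε ω i) μ)
    (hεmean : ∀ i, (∫ ω, ε ω i ∂μ) = 0)
    (y : Ω → Fin n → ℝ)
    (hy : ∀ ω i, y ω i = β0 + βx * x i + βz * z i + ε ω i)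
    (Xs : Matrix (Fin n) (Fin 2) ℝ)
    (hXs : Xs = Matrix.of fun i j => ![(1 : ℝ), rx i] j)
    (βhat : Ω → Fin 2 → ℝ)
    (hβhat : ∀ ω, βhat ω = ((Xsᵀ * M * Xs)⁻¹ * Xsᵀ * M) *ᵥ y ω)
    (A : ℝ)
    (hA : A = βx * (((ones ⬝ᵥ (M *ᵥ ones)) * (rx ⬝ᵥ (M *ᵥ x)) -
            (rx ⬝ᵥ (M *ᵥ ones)) * (x ⬝ᵥ (M *ᵥ ones))) /
        ((ones ⬝ᵥ (M *ᵥ ones)) * (rx ⬝ᵥ (M *ᵥ rx)) - (rx ⬝ᵥ (M *ᵥ ones)) ^ 2) - 1)) :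
    A = 0 ∧
    (∫ ω, βhat ω 1 ∂μ) - βx =
      βz * ((ones ⬝ᵥ (M *ᵥ ones)) * (x ⬝ᵥ (M *ᵥ z)) -
              (x ⬝ᵥ (M *ᵥ ones)) * (z ⬝ᵥ (M *ᵥ ones))) /
        ((ones ⬝ᵥ (M *ᵥ ones)) * (x ⬝ᵥ (M *ᵥ x)) - (x ⬝ᵥ (M *ᵥ ones)) ^ 2) :=
  stmt_9_general x z β0 βx βz ones hones M hSymm hPD hx α hα rx hrx μ ε hεint hεmean y hy Xs hXs
    βhat hβhat A hA
end
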